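/- arXiv:2605.23329 — 2 statements merged into one kernel-verified Lean document; each statement's English description precedes it below -/
import Mathlib

section
/- Let k ≥ 3 and let β₁, …, β_{k−2} be elements of a commutative ring R. Let M be the (k−2) × (k−2) matrix whose first k−3 rows are (β_j^0)_j, (β_j^1)_j, …, (β_j^{k−4})_j and whose last row is (β_j^{k+2})_j. Then det(M) = h₅(β) · ∏_{1 ≤ i < j ≤ k−2} (β_j − β_i). -/
/-!
If a polynomial `T` of degree `≤ n` satisfies `T(β_j) = β_j ^ (n + N)` for all `j`, the row
`(β_j ^ (n + N))_j` is the combination `∑_t T_t • (β_j ^ t)_j` of the rows of the Vandermonde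
matrix, so replacing its last row by it multiplies the determinant by `T_n`. Such a `T` (the
remainder of `X ^ (n + N)` modulo `∏ (X - β_i)`) with `T_n = h_N(β)` is built by induction:
`(X - β_0) T' + β_0 S` works for `N + 1` when `T'` works for `(β_1, …, β_n)` and `N + 1`, and
`S` works for `β` and `N`; its top coefficient is
`h_{N+1}(β_1, …, β_n) + β_0 h_N(β) = h_{N+1}(β)`.
-/

open Finset

variable {F : Type*} [Field F]

/-- The complete homogeneous symmetric polynomial `h_r(β)` of degree `r`
evaluated at `β = (β 1, …, β m)` (with `h_0 = 1`). -/
def hsymPoly {R : Type*} [CommSemiring R] {m : ℕ} (β : Fin m → R) (r : ℕ) : R :=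
  ∑ d ∈ Finset.Nat.antidiagonalTuple m r, ∏ i, β i ^ d i

theorem Finset.Nat.sum_antidiagonalTuple_succ {M : Type*} [AddCommMonoid M] (m r : ℕ)
    (f : (Fin (m + 1) → ℕ) → M) :
    ∑ d ∈ antidiagonalTuple (m + 1) r, f d =
      ∑ p ∈ antidiagonal r, ∑ d ∈ antidiagonalTuple m p.2, f (Fin.cons p.1 d) := by
  have hval : (antidiagonalTuple (m + 1) r).val =
      (antidiagonal r).val.bind fun p => (antidiagonalTuple m p.2).val.map (Fin.cons p.1) :=
    (Multiset.coe_bind _ _).symm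
  simp only [Finset.sum, hval, Multiset.map_bind, Multiset.sum_bind, Multiset.map_map]
  rfl

section hsymPoly

variable {R : Type*} [CommSemiring R]

@[simp]
theorem hsymPoly_zero {m : ℕ} (β : Fin m → R) : hsymPoly β 0 = 1 := by
  simp [hsymPoly, Finset.Nat.antidiagonalTuple_zero_right]

theorem hsymPoly_fin_one (β : Fin 1 → R) (r : ℕ) : hsymPoly β r = β 0 ^ r := by
  simp [hsymPoly]

theorem hsymPoly_eq_sum_antidiagonal {m : ℕ} (β : Fin (m + 1) → R) (r : ℕ) :
    hsymPoly β r = ∑ p ∈ antidiagonal r, β 0 ^ p.1 * hsymPoly (Fin.tail β) p.2 := by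
  simp only [hsymPoly, Finset.Nat.sum_antidiagonalTuple_succ, Fin.prod_univ_succ,
    Fin.cons_zero, Fin.cons_succ, Finset.mul_sum]
  rfl

theorem hsymPoly_succ {m : ℕ} (β : Fin (m + 1) → R) (r : ℕ) :
    hsymPoly β (r + 1) = hsymPoly (Fin.tail β) (r + 1) + β 0 * hsymPoly β r := by
  rw [hsymPoly_eq_sum_antidiagonal, Finset.Nat.sum_antidiagonal_succ, hsymPoly_eq_sum_antidiagonal,
    Finset.mul_sum]
  simp only [pow_zero, one_mul, pow_succ, mul_comm _ (β 0), mul_assoc]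

end hsymPoly

section Vandermonde

open Polynomial Matrix

variable {R : Type*} [CommRing R] {n : ℕ}

theorem exists_natDegree_le_coeff_eq_hsymPoly_eval_eq_pow :
    ∀ {n : ℕ} (β : Fin (n + 1) → R) (N : ℕ), ∃ T : R[X], T.natDegree ≤ n ∧
      T.coeff n = hsymPoly β N ∧ ∀ j, T.eval (β j) = β j ^ (n + N)
  | 0, β, N => ⟨C (β 0 ^ N), (natDegree_C _).le,
      coeff_C_zero.trans (hsymPoly_fin_one β N).symm, fun j => by simp [Fin.fin_one_eq_zero j]⟩
  | n + 1, β, 0 => ⟨X ^ (n + 1), natDegree_X_pow_le _, by simp, by simp⟩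
  | n + 1, β, N + 1 => by
    obtain ⟨T, hTdeg, hTcoeff, hTeval⟩ :=
      exists_natDegree_le_coeff_eq_hsymPoly_eval_eq_pow (Fin.tail β) (N + 1)
    obtain ⟨S, hSdeg, hScoeff, hSeval⟩ :=
      exists_natDegree_le_coeff_eq_hsymPoly_eval_eq_pow β N
    refine ⟨(X - C (β 0)) * T + C (β 0) * S, ?_, ?_, ?_⟩
    · refine natDegree_add_le_of_degree_le (natDegree_mul_le.trans ?_)
        ((natDegree_C_mul_le _ _).trans hSdeg)
      have := natDegree_X_sub_C_le (β 0)
      omega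
    · have hT : T.coeff (n + 1) = 0 := coeff_eq_zero_of_natDegree_lt (by omega)
      rw [hsymPoly_succ, coeff_add, coeff_C_mul, sub_mul, coeff_sub, coeff_X_mul, coeff_C_mul,
        hT, hTcoeff, hScoeff]
      ring
    · intro j
      simp only [eval_add, eval_mul, eval_sub, eval_X, eval_C, hSeval]
      cases j using Fin.cases with
      | zero => ring
      | succ j =>
        rw [show β j.succ = Fin.tail β j from rfl, hTeval]
        ring

theorem det_of_pow_rows_last_eval (β : Fin (n + 1) → R) {T : R[X]} (hT : T.natDegree ≤ n) :
    (of fun i j : Fin (n + 1) =>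
        if (i : ℕ) < n then β j ^ (i : ℕ) else T.eval (β j)).det =
      T.coeff n * ∏ i : Fin (n + 1), ∏ j ∈ Ioi i, (β j - β i) := by
  have hM : (of fun i j : Fin (n + 1) =>
        if (i : ℕ) < n then β j ^ (i : ℕ) else T.eval (β j)) =
      (vandermonde β)ᵀ.updateRow (Fin.last n)
        (∑ t : Fin (n + 1), T.coeff t • (vandermonde β)ᵀ t) := by
    ext i j
    rcases Fin.eq_castSucc_or_eq_last i with ⟨i, rfl⟩ | rfl
    · simp [Fin.castSucc_ne_last, vandermonde_apply]
    · simp [vandermonde_apply, eval_eq_sum_range' (Nat.lt_succ_of_le hT),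
        Fin.sum_univ_eq_sum_range (fun t => T.coeff t * β j ^ t)]
  rw [hM, det_updateRow_sum, det_transpose, det_vandermonde, smul_eq_mul, Fin.val_last]

theorem det_of_pow_rows_last_pow (β : Fin (n + 1) → R) (N : ℕ) :
    (of fun i j : Fin (n + 1) =>
        if (i : ℕ) < n then β j ^ (i : ℕ) else β j ^ (n + N)).det =
      hsymPoly β N * ∏ i : Fin (n + 1), ∏ j ∈ Ioi i, (β j - β i) := by
  obtain ⟨T, hTdeg, hTcoeff, hTeval⟩ := exists_natDegree_le_coeff_eq_hsymPoly_eval_eq_pow β N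
  simp only [← hTeval, det_of_pow_rows_last_eval β hTdeg, hTcoeff]

end Vandermonde

/-- Generalized Vandermonde determinant: the `(k-2) × (k-2)` matrix whose first `k-3` rows are
the power rows `β_j^0, …, β_j^{k-4}` and whose last row is `β_j^{k+2}` has determinant
`h₅(β) · ∏_{i < j} (β_j - β_i)`. -/
theorem det_genVandermonde_h5 {R : Type*} [CommRing R] (k : ℕ) (hk : 3 ≤ k)
    (β : Fin (k - 2) → R) :
    Matrix.det (Matrix.of fun i j : Fin (k - 2) =>
        if (i : ℕ) < k - 3 then β j ^ (i : ℕ) else β j ^ (k + 2)) =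
      hsymPoly β 5 * ∏ i : Fin (k - 2), ∏ j ∈ Finset.Ioi i, (β j - β i) := by
  obtain ⟨m, rfl⟩ : ∃ m, k = m + 3 := ⟨k - 3, by omega⟩
  exact det_of_pow_rows_last_pow (n := m) β 5
end

section
/- Suppose 3 ≤ k ≤ n − 4. Define vectors c₁, c₂, c₃ ∈ F_q^{n+3} by c₁ = (v₁^{−1}u₁α₁^{n−k−4}, …, vₙ^{−1}uₙαₙ^{n−k−4}, 0, 0, 0), c₂ = (v₁^{−1}u₁α₁^{n−k−3}, …, vₙ^{−1}uₙαₙ^{n−k−3}, −η, 0, 0), and c₃ = (v₁^{−1}u₁α₁^{n−k−2}, …, vₙ^{−1}uₙαₙ^{n−k−2}, −η·(α₁ + ⋯ + αₙ), 0, 0). Then c₁, c₂, c₃ all belong to the dual code C^⊥, i.e., Σ_{i=1}^{n+3} (c_s)_i c_i = 0 for every codeword c ∈ C and s = 1, 2, 3. -/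
open Finset

variable {F : Type*} [Field F]

/-- `u i = ∏_{j ≠ i} (α i - α j)⁻¹`. -/
def uCoef {n : ℕ} (α : Fin n → F) (i : Fin n) : F :=
  ∏ j ∈ Finset.univ.erase i, (α i - α j)⁻¹

/-- The `i`-th coefficient of a tuple indexed by `Fin k`, with default value `0`. -/
def coeffOf {k : ℕ} (fc : Fin k → F) (i : ℕ) : F :=
  if h : i < k then fc ⟨i, h⟩ else 0

/-- Evaluation at `x` of the twisted polynomial
`f(x) = ∑_{i=0}^{k-1} f_i x^i + η f_{k-1} x^{k+2}`. -/
def twEval {k : ℕ} (η : F) (fc : Fin k → F) (x : F) : F :=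
  (∑ i : Fin k, fc i * x ^ (i : ℕ)) + η * coeffOf fc (k - 1) * x ^ (k + 2)

/-- The codeword of the extended twisted generalized Reed–Solomon code `C` of length `n+3`
associated to the coefficient tuple `fc`:
`(v₁ f(α₁), …, vₙ f(αₙ), f_{k-1}, f_{k-2}, f_{k-3} + δ f_{k-1})`. -/
def Cword (n k : ℕ) (α v : Fin n → F) (η δ : F) (fc : Fin k → F) : Fin (n + 3) → F :=
  fun j =>
    if h : (j : ℕ) < n then v ⟨(j : ℕ), h⟩ * twEval η fc (α ⟨(j : ℕ), h⟩)
    else if (j : ℕ) = n then coeffOf fc (k - 1)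
    else if (j : ℕ) = n + 1 then coeffOf fc (k - 2)
    else coeffOf fc (k - 3) + δ * coeffOf fc (k - 1)

/-- The extended twisted generalized Reed–Solomon code `C` of length `n+3`. -/
def Ccode (n k : ℕ) (α v : Fin n → F) (η δ : F) : Set (Fin (n + 3) → F) :=
  Set.range (Cword n k α v η δ)

/-- The (Euclidean) dual of a code `D ⊆ F^N`. -/
def dualCode {N : ℕ} (D : Set (Fin N → F)) : Set (Fin N → F) :=
  { x | ∀ c ∈ D, ∑ i, x i * c i = 0 }

/-- `c₁ = (v₁⁻¹u₁α₁^{n-k-4}, …, vₙ⁻¹uₙαₙ^{n-k-4}, 0, 0, 0)`. -/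
def dvec1 (n k : ℕ) (α v : Fin n → F) : Fin (n + 3) → F :=
  fun j =>
    if h : (j : ℕ) < n then
      (v ⟨(j : ℕ), h⟩)⁻¹ * uCoef α ⟨(j : ℕ), h⟩ * α ⟨(j : ℕ), h⟩ ^ (n - k - 4)
    else 0

/-- `c₂ = (v₁⁻¹u₁α₁^{n-k-3}, …, vₙ⁻¹uₙαₙ^{n-k-3}, -η, 0, 0)`. -/
def dvec2 (n k : ℕ) (α v : Fin n → F) (η : F) : Fin (n + 3) → F :=
  fun j =>
    if h : (j : ℕ) < n then
      (v ⟨(j : ℕ), h⟩)⁻¹ * uCoef α ⟨(j : ℕ), h⟩ * α ⟨(j : ℕ), h⟩ ^ (n - k - 3)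
    else if (j : ℕ) = n then -η
    else 0

/-- `c₃ = (v₁⁻¹u₁α₁^{n-k-2}, …, vₙ⁻¹uₙαₙ^{n-k-2}, -η(α₁ + ⋯ + αₙ), 0, 0)`. -/
def dvec3 (n k : ℕ) (α v : Fin n → F) (η : F) : Fin (n + 3) → F :=
  fun j =>
    if h : (j : ℕ) < n then
      (v ⟨(j : ℕ), h⟩)⁻¹ * uCoef α ⟨(j : ℕ), h⟩ * α ⟨(j : ℕ), h⟩ ^ (n - k - 2)
    else if (j : ℕ) = n then -η * ∑ i, α i
    else 0


-- auxiliary lemmas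
section Aux
variable {F : Type*} [Field F]
open Polynomial

lemma coeff_basis_top {n : ℕ} (α : Fin n → F) (hα : Function.Injective α) (i : Fin n) :
    (Lagrange.basis Finset.univ α i).coeff (n - 1) = uCoef α i := by
  have hd : (Lagrange.basis Finset.univ α i).natDegree = n - 1 := by
    rw [Lagrange.natDegree_basis hα.injOn (mem_univ i), card_univ, Fintype.card_fin]
  rw [← hd, coeff_natDegree, Lagrange.basis, leadingCoeff_prod, uCoef]
  refine Finset.prod_congr rfl fun j hj => ?_
  have hij : α i ≠ α j := fun h => (mem_erase.mp hj).1.symm (hα h)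
  rw [Lagrange.basisDivisor, leadingCoeff_mul, leadingCoeff_C, leadingCoeff_X_sub_C, mul_one]

lemma coeff_interpolate_top {n : ℕ} (α : Fin n → F) (hα : Function.Injective α) (g : Fin n → F) :
    (Lagrange.interpolate Finset.univ α g).coeff (n - 1) = ∑ i, g i * uCoef α i := by
  rw [Lagrange.interpolate_apply, finset_sum_coeff]
  exact Finset.sum_congr rfl fun i _ => by rw [coeff_C_mul, coeff_basis_top α hα]

lemma sum_u_pow_lt {n : ℕ} (α : Fin n → F) (hα : Function.Injective α) (r : ℕ) (hr : r < n) :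
    ∑ i, uCoef α i * α i ^ r = if n - 1 = r then 1 else 0 := by
  have h1 : Lagrange.interpolate Finset.univ α (fun i => α i ^ r) = (X : F[X]) ^ r := by
    refine (Lagrange.eq_interpolate_of_eval_eq _ hα.injOn ?_ fun i _ => by simp).symm
    rw [card_univ, Fintype.card_fin]
    calc (X ^ r : F[X]).degree ≤ r := degree_X_pow_le r
    _ < (n : WithBot ℕ) := by exact_mod_cast hr
  have := coeff_interpolate_top α hα (fun i => α i ^ r)
  rw [h1, coeff_X_pow] at this
  simpa [mul_comm] using this.symm

lemma sum_u_pow_eq {n : ℕ} (hn : 0 < n) (α : Fin n → F) (hα : Function.Injective α) :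
    ∑ i, uCoef α i * α i ^ n = ∑ i, α i := by
  have hnod : (Lagrange.nodal Finset.univ α : F[X]).degree = n := by
    rw [Lagrange.degree_nodal, card_univ, Fintype.card_fin]
  have h1 : Lagrange.interpolate Finset.univ α (fun i => α i ^ n)
      = (X : F[X]) ^ n - Lagrange.nodal Finset.univ α := by
    refine (Lagrange.eq_interpolate_of_eval_eq _ hα.injOn ?_ fun i _ => ?_).symm
    · rw [card_univ, Fintype.card_fin]
      have := degree_sub_lt (p := (X : F[X]) ^ n) (q := Lagrange.nodal Finset.univ α)
        (by rw [degree_X_pow, hnod]) (pow_ne_zero _ (X_ne_zero (R := F)))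
        (by rw [(monic_X_pow n).leadingCoeff, Lagrange.nodal_monic.leadingCoeff])
      rwa [degree_X_pow] at this
    · rw [eval_sub, eval_pow, eval_X, Lagrange.eval_nodal_at_node (mem_univ i), sub_zero]
  have h2 : (∏ i : Fin n, (X - C (α i))).coeff (n - 1) = -∑ i, α i := by
    have := prod_X_sub_C_coeff_card_pred (Finset.univ : Finset (Fin n)) α (by simpa using hn)
    simpa using this
  have := coeff_interpolate_top α hα (fun i => α i ^ n)
  rw [h1, coeff_sub, coeff_X_pow, if_neg (by omega), Lagrange.nodal_eq, h2] at this
  simp only [zero_sub, neg_neg] at this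
  simpa [mul_comm] using this.symm

end Aux

lemma sum_expand {n k : ℕ} (α : Fin n → F) (η : F) (fc : Fin k → F) (m : ℕ) :
    ∑ i : Fin n, uCoef α i * α i ^ m * twEval η fc (α i)
      = (∑ t : Fin k, fc t * ∑ i : Fin n, uCoef α i * α i ^ (m + (t : ℕ)))
        + η * coeffOf fc (k - 1) * ∑ i : Fin n, uCoef α i * α i ^ (m + (k + 2)) := by
  simp only [twEval, mul_add, Finset.sum_add_distrib]
  congr 1
  · simp only [Finset.mul_sum]
    rw [Finset.sum_comm]
    exact Finset.sum_congr rfl fun t _ => Finset.sum_congr rfl fun i _ => by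
      rw [pow_add]; ring
  · rw [Finset.mul_sum]
    exact Finset.sum_congr rfl fun i _ => by rw [pow_add]; ring

lemma sum_fin_add_three {N : ℕ} (f : Fin (N + 3) → F) :
    ∑ j, f j = (∑ j : Fin N, f (j.castSucc.castSucc.castSucc))
      + f ⟨N, by omega⟩ + f ⟨N + 1, by omega⟩ + f ⟨N + 2, by omega⟩ := by
  rw [Fin.sum_univ_castSucc, Fin.sum_univ_castSucc, Fin.sum_univ_castSucc]
  rfl

lemma cword_main {n k : ℕ} (α v : Fin n → F) (η δ : F) (fc : Fin k → F) (j : Fin n) :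
    Cword n k α v η δ fc (j.castSucc.castSucc.castSucc) = v j * twEval η fc (α j) := by
  have h : ((j.castSucc.castSucc.castSucc : Fin (n + 3)) : ℕ) = (j : ℕ) := rfl
  rw [Cword]
  simp only [h, dif_pos j.isLt]


/-- For `3 ≤ k ≤ n - 4`, the vectors `c₁, c₂, c₃` all belong to the dual code `C^⊥`. -/
theorem dvecs_mem_dualCode {F : Type*} [Field F] [Fintype F]
    (n k : ℕ) (hk3 : 3 ≤ k) (hkn : k + 4 ≤ n) (hnq : n ≤ Fintype.card F)
    (α v : Fin n → F) (hα : Function.Injective α) (hv : ∀ i, v i ≠ 0)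
    (η δ : F) (hη : η ≠ 0) :
    dvec1 n k α v ∈ dualCode (Ccode n k α v η δ) ∧
    dvec2 n k α v η ∈ dualCode (Ccode n k α v η δ) ∧
    dvec3 n k α v η ∈ dualCode (Ccode n k α v η δ) := by
  have hn : 0 < n := by omega
  have key : ∀ (m : ℕ) (fc : Fin k → F),
      ∑ j : Fin n, ((v j)⁻¹ * uCoef α j * α j ^ m)
        * Cword n k α v η δ fc (j.castSucc.castSucc.castSucc)
      = (∑ t : Fin k, fc t * ∑ i : Fin n, uCoef α i * α i ^ (m + (t : ℕ)))
        + η * coeffOf fc (k - 1) * ∑ i : Fin n, uCoef α i * α i ^ (m + (k + 2)) := by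
    intro m fc
    rw [← sum_expand]
    refine Finset.sum_congr rfl fun j _ => ?_
    rw [cword_main]
    field_simp [hv j]
  have hcoe : ∀ j : Fin n, ((j.castSucc.castSucc.castSucc : Fin (n + 3)) : ℕ) = (j : ℕ) :=
    fun j => rfl
  have hCn : ∀ fc : Fin k → F, Cword n k α v η δ fc ⟨n, by omega⟩ = coeffOf fc (k - 1) := by
    intro fc; simp [Cword]
  refine ⟨?_, ?_, ?_⟩
  · rintro c ⟨fc, rfl⟩
    rw [sum_fin_add_three]
    have e1 : ∀ j : Fin n, dvec1 n k α v (j.castSucc.castSucc.castSucc)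
        = (v j)⁻¹ * uCoef α j * α j ^ (n - k - 4) := fun j => by
      simp [dvec1, hcoe j, j.isLt]
    have S1 : ∀ t : Fin k, ∑ i : Fin n, uCoef α i * α i ^ (n - k - 4 + (t : ℕ)) = 0 := fun t => by
      rw [sum_u_pow_lt α hα _ (by have := t.isLt; omega), if_neg (by have := t.isLt; omega)]
    have S2 : ∑ i : Fin n, uCoef α i * α i ^ (n - k - 4 + (k + 2)) = 0 := by
      rw [sum_u_pow_lt α hα _ (by omega), if_neg (by omega)]
    simp only [e1]
    rw [key (n - k - 4) fc]
    simp only [S1, S2, mul_zero, Finset.sum_const_zero, add_zero, zero_add]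
    simp [dvec1]
  · rintro c ⟨fc, rfl⟩
    rw [sum_fin_add_three]
    have e1 : ∀ j : Fin n, dvec2 n k α v η (j.castSucc.castSucc.castSucc)
        = (v j)⁻¹ * uCoef α j * α j ^ (n - k - 3) := fun j => by
      simp [dvec2, hcoe j, j.isLt]
    have S1 : ∀ t : Fin k, ∑ i : Fin n, uCoef α i * α i ^ (n - k - 3 + (t : ℕ)) = 0 := fun t => by
      rw [sum_u_pow_lt α hα _ (by have := t.isLt; omega), if_neg (by have := t.isLt; omega)]
    have S2 : ∑ i : Fin n, uCoef α i * α i ^ (n - k - 3 + (k + 2)) = 1 := by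
      rw [sum_u_pow_lt α hα _ (by omega), if_pos (by omega)]
    have t1 : dvec2 n k α v η ⟨n, by omega⟩ = -η := by simp [dvec2]
    have t2 : dvec2 n k α v η ⟨n + 1, by omega⟩ = 0 := by simp [dvec2]
    have t3 : dvec2 n k α v η ⟨n + 2, by omega⟩ = 0 := by simp [dvec2]
    simp only [e1]
    rw [key (n - k - 3) fc, t1, t2, t3, hCn fc]
    simp only [S1, S2, mul_zero, Finset.sum_const_zero, mul_one, zero_mul, add_zero, zero_add]
    ring
  · rintro c ⟨fc, rfl⟩
    rw [sum_fin_add_three]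
    have e1 : ∀ j : Fin n, dvec3 n k α v η (j.castSucc.castSucc.castSucc)
        = (v j)⁻¹ * uCoef α j * α j ^ (n - k - 2) := fun j => by
      simp [dvec3, hcoe j, j.isLt]
    have S1 : ∀ t : Fin k, ∑ i : Fin n, uCoef α i * α i ^ (n - k - 2 + (t : ℕ)) = 0 := fun t => by
      rw [sum_u_pow_lt α hα _ (by have := t.isLt; omega), if_neg (by have := t.isLt; omega)]
    have S2 : ∑ i : Fin n, uCoef α i * α i ^ (n - k - 2 + (k + 2)) = ∑ i, α i := by
      rw [show n - k - 2 + (k + 2) = n by omega]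
      exact sum_u_pow_eq hn α hα
    have t1 : dvec3 n k α v η ⟨n, by omega⟩ = -η * ∑ i, α i := by simp [dvec3]
    have t2 : dvec3 n k α v η ⟨n + 1, by omega⟩ = 0 := by simp [dvec3]
    have t3 : dvec3 n k α v η ⟨n + 2, by omega⟩ = 0 := by simp [dvec3]
    simp only [e1]
    rw [key (n - k - 2) fc, t1, t2, t3, hCn fc]
    simp only [S1, S2, mul_zero, Finset.sum_const_zero, zero_mul, add_zero, zero_add]
    ring
end
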